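/- For the prototype system ẋ = εx − xy, ẏ = −y + x², consider the approximation φ(x,ε) = x²/(1 + 2ε) + 2x⁴/((1 + 2ε)²(1 + 4ε)), which is well defined for |ε| < 1/4. Then there exist K > 0 and δ > 0 such that the residual satisfies |(H_ex φ)(x,ε)| ≤ K|x|⁶ whenever |x| ≤ δ and |ε| ≤ 1/8; that is, φ satisfies the invariance equation to a residual O(x⁶), uniformly for ε in a neighbourhood of 0. -/

import Mathlib

/-- Residual operator for the prototype system `ẋ = εx − xy`, `ẏ = −y + x²`:
`(H_ex φ)(x,ε) = (∂φ/∂x)(x,ε)·x·(ε − φ(x,ε)) + φ(x,ε) − x²`. -/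
noncomputable def Hex (φ : ℝ → ℝ → ℝ) (x ε : ℝ) : ℝ :=
  deriv (fun x' => φ x' ε) x * x * (ε - φ x ε) + φ x ε - x ^ 2

/-! With `A = 1 + 2ε` and `B = 1 + 4ε`, the x²- and x⁴-terms of the residual cancel exactly
(that is how their coefficients `1/A` and `2/(A²B)` are determined), leaving
`−x⁶ (12/(A³B) + 16x²/(A⁴B²))`. For `|ε| ≤ 1/8` we have `A ≥ 3/4` and `B ≥ 1/2`, so the
bracket is bounded once `|x| ≤ 1`. -/

theorem hasDerivAt_resummed (A B x : ℝ) :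
    HasDerivAt (fun x => x ^ 2 / A + 2 * x ^ 4 / (A ^ 2 * B))
      (2 * x / A + 8 * x ^ 3 / (A ^ 2 * B)) x := by
  refine (((hasDerivAt_pow 2 x).div_const A).add
    (((hasDerivAt_pow 4 x).const_mul 2).div_const (A ^ 2 * B))).congr_deriv ?_
  norm_num
  ring

theorem Hex_resummed_eq {ε : ℝ} (hA : 1 + 2 * ε ≠ 0) (hB : 1 + 4 * ε ≠ 0) (x : ℝ) :
    Hex (fun x ε => x ^ 2 / (1 + 2 * ε) + 2 * x ^ 4 / ((1 + 2 * ε) ^ 2 * (1 + 4 * ε))) x ε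
      = -(x ^ 6 * (12 / ((1 + 2 * ε) ^ 3 * (1 + 4 * ε))
          + 16 * x ^ 2 / ((1 + 2 * ε) ^ 4 * (1 + 4 * ε) ^ 2))) := by
  rw [Hex, (hasDerivAt_resummed _ _ x).deriv]
  -- in terms of `A = 1 + 2ε` alone, the denominators are powers of `A` and `2A - 1`
  obtain ⟨A, rfl⟩ : ∃ A, ε = (A - 1) / 2 := ⟨1 + 2 * ε, by ring⟩
  rw [show 1 + 2 * ((A - 1) / 2) = A by ring, show 1 + 4 * ((A - 1) / 2) = 2 * A - 1 by ring]
    at *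
  field_simp
  ring

theorem resummed_residual_coeff_abs_le {A B x : ℝ} (hA : 3 / 4 ≤ A) (hB : 1 / 2 ≤ B)
    (hx : |x| ≤ 1) : |12 / (A ^ 3 * B) + 16 * x ^ 2 / (A ^ 4 * B ^ 2)| ≤ 260 := by
  have hA₀ : 0 < A := by linarith
  have hB₀ : 0 < B := by linarith
  have hx2 : x ^ 2 ≤ 1 := by nlinarith [sq_abs x, abs_nonneg x]
  rw [abs_of_nonneg (add_nonneg (div_nonneg (by norm_num) (mul_pos (pow_pos hA₀ 3) hB₀).le)
    (div_nonneg (by positivity) (mul_pos (pow_pos hA₀ 4) (pow_pos hB₀ 2)).le))]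
  calc 12 / (A ^ 3 * B) + 16 * x ^ 2 / (A ^ 4 * B ^ 2)
      ≤ 12 / ((3 / 4) ^ 3 * (1 / 2)) + 16 * 1 / ((3 / 4) ^ 4 * (1 / 2) ^ 2) := by gcongr
    _ ≤ 260 := by norm_num

theorem residual_of_resummed_approximation :
    ∃ K > (0 : ℝ), ∃ δ > (0 : ℝ), ∀ x ε : ℝ, |x| ≤ δ → |ε| ≤ 1 / 8 →
      |Hex (fun x ε => x ^ 2 / (1 + 2 * ε)
        + 2 * x ^ 4 / ((1 + 2 * ε) ^ 2 * (1 + 4 * ε))) x ε| ≤ K * |x| ^ 6 := by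
  refine ⟨260, by norm_num, 1, one_pos, fun x ε hx hε => ?_⟩
  obtain ⟨hε₁, hε₂⟩ := abs_le.mp hε
  rw [Hex_resummed_eq (by linarith) (by linarith), abs_neg, abs_mul, abs_pow, mul_comm]
  gcongr
  exact resummed_residual_coeff_abs_le (by linarith) (by linarith) hx
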